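/- arXiv:1807.11183 — 3 statements merged into one kernel-verified Lean document; each statement's English description precedes it below -/
import Mathlib

section
/- Let T be a spanning tree of Q_n and let R be a proper nonempty subset of [n]. If T reduces over R, then π_R(T) is a spanning tree of Q_R. -/
open SimpleGraph

/-- The `n`-cube: vertices are the subsets of `[n]` (modelled as `Finset (Fin n)`),
with an edge between `X` and `Y` iff their symmetric difference is a singleton. -/
def cube (n : ℕ) : SimpleGraph (Finset (Fin n)) where
  Adj X Y := (symmDiff X Y).card = 1
  symm := by
    constructor
    intro X Y h
    rwa [symmDiff_comm]
  loopless := by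
    constructor
    intro X h
    simp [symmDiff_self, Finset.bot_eq_empty] at h

/-- `T` is a spanning tree of `G` (both graphs on the same vertex set). -/
def IsSpanningTreeOf {V : Type*} (T G : SimpleGraph V) : Prop :=
  T ≤ G ∧ T.IsTree

/-- The edge `e` of the `n`-cube is in direction `i`. -/
def edgeInDir {n : ℕ} (i : Fin n) (e : Sym2 (Finset (Fin n))) : Prop :=
  ∃ X : Finset (Fin n), e = s(X, symmDiff X {i})

/-- The number of edges of `T` in direction `i`. -/
noncomputable def dirCount {n : ℕ} (T : SimpleGraph (Finset (Fin n))) (i : Fin n) : ℕ :=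
  {e | e ∈ T.edgeSet ∧ edgeInDir i e}.ncard

/-- `a` is the signature of the tree `T`. -/
def HasSig {n : ℕ} (T : SimpleGraph (Finset (Fin n))) (a : Fin n → ℕ) : Prop :=
  ∀ i, dirCount T i = a i

/-- `a` is a signature of `Q_n`, i.e. the signature of some spanning tree of the `n`-cube. -/
def IsSignature (n : ℕ) (a : Fin n → ℕ) : Prop :=
  ∃ T, IsSpanningTreeOf T (cube n) ∧ HasSig T a

/-- A section of the set of nonempty subsets of `[n]`. -/
def IsSection {n : ℕ} (ψ : Finset (Fin n) → Fin n) : Prop :=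
  ∀ X : Finset (Fin n), X.Nonempty → ψ X ∈ X

/-- The number of nonempty subsets on which the section `ψ` takes the value `i`. -/
noncomputable def secCount {n : ℕ} (ψ : Finset (Fin n) → Fin n) (i : Fin n) : ℕ :=
  {X : Finset (Fin n) | X.Nonempty ∧ ψ X = i}.ncard

/-- The tuple `a` reduces over `R` : `Σ_{i ∈ R} a i = 2^|R| - 1`. -/
def ReducesOver {n : ℕ} (a : Fin n → ℕ) (R : Finset (Fin n)) : Prop :=
  ∑ i ∈ R, a i = 2 ^ R.card - 1

/-- `a` is reducible: it reduces over some proper nonempty subset of `[n]`. -/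
def IsReducibleSig {n : ℕ} (a : Fin n → ℕ) : Prop :=
  ∃ R : Finset (Fin n), R.Nonempty ∧ R ≠ Finset.univ ∧ ReducesOver a R

/-- `a` is irreducible. -/
def IsIrreducibleSig {n : ℕ} (a : Fin n → ℕ) : Prop := ¬ IsReducibleSig a

/-- `T` is upright: every vertex `X` is at distance `|X|` in `T` from the root `∅`. -/
def IsUpright {n : ℕ} (T : SimpleGraph (Finset (Fin n))) : Prop :=
  ∀ X : Finset (Fin n), T.dist X ∅ = X.card

/-- `ψ` is the section associated to the upright tree `T`: for each nonempty `X`,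
`ψ X ∈ X` and `X - {ψ X}` is the next vertex after `X` on the path in `T` from `X` to `∅`. -/
def IsTreeSection {n : ℕ} (T : SimpleGraph (Finset (Fin n))) (ψ : Finset (Fin n) → Fin n) : Prop :=
  ∀ X : Finset (Fin n), X.Nonempty → ψ X ∈ X ∧ T.Adj X (X.erase (ψ X))

/-- The minimum of `Σ_{i ∈ K} a i` over the sets `K` of `k` directions. -/
noncomputable def minSum {n : ℕ} (a : Fin n → ℕ) (k : ℕ) : ℕ :=
  sInf {m : ℕ | ∃ K : Finset (Fin n), K.card = k ∧ ∑ i ∈ K, a i = m}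

/-- The excess of `a` at `k`. -/
noncomputable def excess {n : ℕ} (a : Fin n → ℕ) (k : ℕ) : ℤ :=
  (minSum a k : ℤ) - (2 ^ k - 1)

/-- The result of sliding the edge `e` in direction `i`. -/
def slideEdge {n : ℕ} (i : Fin n) (e : Sym2 (Finset (Fin n))) : Sym2 (Finset (Fin n)) :=
  Sym2.map (fun X => symmDiff X {i}) e

/-- The edge `e` of the spanning tree `T` of `Q_n` is `i`-slidable. -/
def Slidable (n : ℕ) (T : SimpleGraph (Finset (Fin n))) (i : Fin n)
    (e : Sym2 (Finset (Fin n))) : Prop :=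
  e ∈ T.edgeSet ∧
    IsSpanningTreeOf (SimpleGraph.fromEdgeSet ((T.edgeSet \ {e}) ∪ {slideEdge i e})) (cube n)

/-- The edge set `E` is (the edge set of) a spanning tree of the subgraph of the
`n`-cube induced on the vertex set `s`. -/
def IsSpanningTreeOn (n : ℕ) (s : Set (Finset (Fin n))) (E : Set (Sym2 (Finset (Fin n)))) : Prop :=
  E ⊆ (cube n).edgeSet ∧ (∀ e ∈ E, ∀ v ∈ e, v ∈ s) ∧
    ((SimpleGraph.fromEdgeSet E).induce s).IsTree

/-- The edges of `T` with both endpoints in `s`. -/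
def edgesWithin {n : ℕ} (s : Set (Finset (Fin n))) (T : SimpleGraph (Finset (Fin n))) :
    Set (Sym2 (Finset (Fin n))) :=
  {e | e ∈ T.edgeSet ∧ ∀ v ∈ e, v ∈ s}

/-- The edge `e` of the tree with edge set `E`, spanning the subgraph of the `n`-cube
induced on `s`, is `i`-slidable. -/
def SlidableOn (n : ℕ) (s : Set (Finset (Fin n))) (E : Set (Sym2 (Finset (Fin n))))
    (i : Fin n) (e : Sym2 (Finset (Fin n))) : Prop :=
  e ∈ E ∧ IsSpanningTreeOn n s ((E \ {e}) ∪ {slideEdge i e})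

/-- The number of edges of `T` in direction `i` with both endpoints in `s`. -/
noncomputable def dirCountOn {n : ℕ} (s : Set (Finset (Fin n)))
    (T : SimpleGraph (Finset (Fin n))) (i : Fin n) : ℕ :=
  {e | e ∈ T.edgeSet ∧ edgeInDir i e ∧ ∀ v ∈ e, v ∈ s}.ncard

/-- `T'` is a spanning tree of the `n`-cube obtained from the spanning tree `T` by a
single edge slide. -/
def SlideStep (n : ℕ) (T T' : SimpleGraph (Finset (Fin n))) : Prop :=
  IsSpanningTreeOf T (cube n) ∧ IsSpanningTreeOf T' (cube n) ∧
    ∃ (i : Fin n) (e : Sym2 (Finset (Fin n))), e ∈ T.edgeSet ∧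
      T' = SimpleGraph.fromEdgeSet ((T.edgeSet \ {e}) ∪ {slideEdge i e})

/-- The trees `T` and `T'` are related by a single edge slide. -/
def SlideAdj (n : ℕ) (T T' : SimpleGraph (Finset (Fin n))) : Prop :=
  T ≠ T' ∧ ∃ (i : Fin n) (e : Sym2 (Finset (Fin n))),
    (e ∈ T.edgeSet ∧ T' = SimpleGraph.fromEdgeSet ((T.edgeSet \ {e}) ∪ {slideEdge i e})) ∨
    (e ∈ T'.edgeSet ∧ T = SimpleGraph.fromEdgeSet ((T'.edgeSet \ {e}) ∪ {slideEdge i e}))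

/-- The spanning trees of the `n`-cube. -/
def SpanningTrees (n : ℕ) := {T : SimpleGraph (Finset (Fin n)) // IsSpanningTreeOf T (cube n)}

/-- The edge slide graph `E(n)` of the `n`-cube. -/
def eslide (n : ℕ) : SimpleGraph (SpanningTrees n) where
  Adj T T' := SlideAdj n T.1 T'.1
  symm := by
    constructor
    rintro T T' ⟨hne, i, e, h⟩
    exact ⟨hne.symm, i, e, h.symm⟩
  loopless := by
    constructor
    rintro T ⟨hne, -⟩
    exact hne rfl

/-- The projection `π_R(T)` of `T` to `Q_R`: a graph on the subsets of `R`, with `A`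
adjacent to `B` iff some edge of `T` projects to `{A, B}`. -/
def projTree (n : ℕ) (R : Finset (Fin n)) (T : SimpleGraph (Finset (Fin n))) :
    SimpleGraph ↥{W : Finset (Fin n) | W ⊆ R} where
  Adj A B := A.1 ≠ B.1 ∧ ∃ U V : Finset (Fin n), T.Adj U V ∧ U ∩ R = A.1 ∧ V ∩ R = B.1
  symm := by
    constructor
    rintro A B ⟨hne, U, V, hUV, hU, hV⟩
    exact ⟨hne.symm, V, U, hUV.symm, hV, hU⟩
  loopless := by
    constructor
    rintro A ⟨hne, -⟩
    exact hne rfl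

/-- The projected edge set `π_R(T)`: images under `π_R` of the edges of `T` in
directions belonging to `R`. -/
def projEdges {n : ℕ} (R : Finset (Fin n)) (T : SimpleGraph (Finset (Fin n))) :
    Set (Sym2 (Finset (Fin n))) :=
  {f | ∃ e ∈ T.edgeSet, (∃ i ∈ R, edgeInDir i e) ∧ f = Sym2.map (· ∩ R) e}

/-- The decomposition `T ↦ (F_T, (T(R,X))_{X ⊆ R})` of a tree reducing over `R`. -/
def decompose (n : ℕ) (R : Finset (Fin n)) (T : SimpleGraph (Finset (Fin n))) :
    Set (Sym2 (Finset (Fin n))) ×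
      ((X : Finset (Fin n)) → X ⊆ R → SimpleGraph ↥{W : Finset (Fin n) | W ∩ R = X}) :=
  ⟨{e | e ∈ T.edgeSet ∧ ∃ i ∈ R, edgeInDir i e},
   fun X _ => T.induce {W : Finset (Fin n) | W ∩ R = X}⟩

/-- `s` is the least index such that `ε_k(a) = 0` for all `s ≤ k ≤ n`; i.e. the
entries of (an ordered) `a` with index `≤ s` form the unsaturated part of `a`. -/
def UnsatIndex (n : ℕ) (a : Fin n → ℕ) (s : ℕ) : Prop :=
  (∀ k, s ≤ k → k ≤ n → excess a k = 0) ∧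
    ∀ s' < s, ¬ (∀ k, s' ≤ k → k ≤ n → excess a k = 0)

/-- The restriction of `a` to its first `s` entries is reducible (as a tuple of length `s`). -/
def ReducibleBelow {n : ℕ} (a : Fin n → ℕ) (s : ℕ) : Prop :=
  ∃ R : Finset (Fin n), R.Nonempty ∧ (∀ i ∈ R, (i : ℕ) < s) ∧ R.card < s ∧
    ∑ i ∈ R, a i = 2 ^ R.card - 1

/-- `a` is strictly reducible: it is reducible and its unsaturated part is reducible. -/
def StrictlyReducible (n : ℕ) (a : Fin n → ℕ) : Prop :=
  IsReducibleSig a ∧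
    ∃ (σ : Equiv.Perm (Fin n)) (s : ℕ), Monotone (a ∘ σ) ∧
      UnsatIndex n (a ∘ σ) s ∧ ReducibleBelow (a ∘ σ) s

/-!
Projecting along `U ↦ U ∩ R` sends each edge of `T` either to a single vertex (directions outside
`R`) or to an edge of `Q_R` (directions in `R`). Since `T` is connected and the projection is onto,
`π_R(T)` is a connected subgraph of `Q_R`; it has at most as many edges as `T` has in directions of
`R`, which by reduction is `2^|R| - 1`, one less than the number of vertices of `Q_R`. A connected
graph with fewer edges than vertices is a tree.
-/

namespace Finset

variable {α : Type*}

lemma symmDiff_inter_inter [DecidableEq α] (U V R : Finset α) :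
    symmDiff (U ∩ R) (V ∩ R) = symmDiff U V ∩ R :=
  (inf_symmDiff_distrib_right U V R).symm

lemma natCard_setOf_subset (R : Finset α) :
    Nat.card {W : Finset α | W ⊆ R} = 2 ^ R.card := by
  have : {W : Finset α | W ⊆ R} = (R.powerset : Set (Finset α)) := by
    ext W
    simp
  rw [this, Nat.card_coe_set_eq, Set.ncard_coe_finset, Finset.card_powerset]

end Finset

namespace SimpleGraph

variable {V W : Type*} {G : SimpleGraph V}

lemma Reachable.map_apply {u v : V} (f : V → W) (h : G.Reachable u v) :
    (G.map f).Reachable (f u) (f v) := by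
  obtain ⟨p⟩ := h
  induction p with
  | nil => rfl
  | @cons a b _ hab _ ih =>
    refine Reachable.trans ?_ ih
    by_cases hf : f a = f b
    · rw [hf]
    · exact Adj.reachable ⟨hf, a, b, hab, rfl, rfl⟩

lemma Connected.map_of_surjective {f : V → W} (hG : G.Connected) (hf : f.Surjective) :
    (G.map f).Connected := by
  have : Nonempty W := hG.nonempty.map f
  refine Connected.mk fun x y => ?_
  obtain ⟨u, rfl⟩ := hf x
  obtain ⟨v, rfl⟩ := hf y
  exact (hG.preconnected u v).map_apply f

lemma edgeSet_map_subset_image (f : V → W) (G : SimpleGraph V) :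
    (G.map f).edgeSet ⊆ Sym2.map f '' {e | e ∈ G.edgeSet ∧ ¬ (e.map f).IsDiag} := by
  intro e he
  induction e using Sym2.ind with
  | _ x y =>
    obtain ⟨hxy, u, v, huv, rfl, rfl⟩ := he
    exact ⟨s(u, v), ⟨huv, hxy⟩, rfl⟩

lemma Connected.isTree_of_ncard_edgeSet_lt [Finite V] (hG : G.Connected)
    (h : G.edgeSet.ncard < Nat.card V) : G.IsTree := by
  refine isTree_iff_connected_and_card.2 ⟨hG, le_antisymm ?_ hG.card_vert_le_card_edgeSet_add_one⟩
  rw [Nat.card_coe_set_eq]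
  omega

end SimpleGraph

section Cube

variable {n : ℕ}

lemma edgeInDir_iff {i : Fin n} {U V : Finset (Fin n)} :
    edgeInDir i s(U, V) ↔ symmDiff U V = {i} := by
  constructor
  · rintro ⟨X, hX⟩
    rcases Sym2.eq_iff.1 hX with ⟨rfl, rfl⟩ | ⟨rfl, rfl⟩
    · rw [symmDiff_symmDiff_cancel_left]
    · rw [symmDiff_comm, symmDiff_symmDiff_cancel_left]
  · intro h
    exact ⟨U, by rw [← h, symmDiff_symmDiff_cancel_left]⟩

lemma edgeInDir_unique {i j : Fin n} {e : Sym2 (Finset (Fin n))}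
    (hi : edgeInDir i e) (hj : edgeInDir j e) : i = j := by
  induction e using Sym2.ind with
  | _ U V =>
    rw [edgeInDir_iff] at hi hj
    exact Finset.singleton_injective (hi.symm.trans hj)

lemma ncard_edgesInDirs_eq_sum_dirCount (T : SimpleGraph (Finset (Fin n)))
    (R : Finset (Fin n)) :
    {e | e ∈ T.edgeSet ∧ ∃ i ∈ R, edgeInDir i e}.ncard = ∑ i ∈ R, dirCount T i := by
  have hunion : {e | e ∈ T.edgeSet ∧ ∃ i ∈ R, edgeInDir i e} =
      ⋃ i ∈ (R : Set (Fin n)), {e | e ∈ T.edgeSet ∧ edgeInDir i e} := by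
    ext e
    simp only [Set.mem_ofPred_eq, Set.mem_iUnion, Finset.mem_coe, exists_prop]
    tauto
  have hdisj : (R : Set (Fin n)).PairwiseDisjoint
      fun i => {e | e ∈ T.edgeSet ∧ edgeInDir i e} :=
    fun i _ j _ hij => Set.disjoint_left.2 fun _ hi hj => hij (edgeInDir_unique hi.2 hj.2)
  rw [hunion, R.finite_toSet.ncard_biUnion (fun _ _ => Set.toFinite _) hdisj,
    finsum_mem_coe_finset]
  rfl

lemma exists_mem_symmDiff_eq_singleton_of_inter_ne {U V R : Finset (Fin n)}
    (h : (cube n).Adj U V) (hne : U ∩ R ≠ V ∩ R) : ∃ i ∈ R, symmDiff U V = {i} := by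
  obtain ⟨i, hi⟩ := Finset.card_eq_one.1 h
  refine ⟨i, ?_, hi⟩
  by_contra hiR
  apply hne
  rw [← symmDiff_eq_bot, Finset.symmDiff_inter_inter, hi, Finset.singleton_inter_of_notMem hiR]
  rfl

lemma cube_adj_inter {U V R : Finset (Fin n)} (h : (cube n).Adj U V) (hne : U ∩ R ≠ V ∩ R) :
    (cube n).Adj (U ∩ R) (V ∩ R) := by
  obtain ⟨i, hiR, hi⟩ := exists_mem_symmDiff_eq_singleton_of_inter_ne h hne
  show (symmDiff (U ∩ R) (V ∩ R)).card = 1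
  rw [Finset.symmDiff_inter_inter, hi, Finset.singleton_inter_of_mem hiR, Finset.card_singleton]

end Cube

section Projection

variable {n : ℕ}

def cubeProj (R : Finset (Fin n)) (U : Finset (Fin n)) : {W : Finset (Fin n) | W ⊆ R} :=
  ⟨U ∩ R, Finset.inter_subset_right⟩

lemma cubeProj_surjective (R : Finset (Fin n)) : (cubeProj R).Surjective :=
  fun A => ⟨A.1, Subtype.ext (Finset.inter_eq_left.2 A.2)⟩

lemma projTree_eq_map (R : Finset (Fin n)) (T : SimpleGraph (Finset (Fin n))) :
    projTree n R T = T.map (cubeProj R) := by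
  ext A B
  simp only [projTree, map_adj', cubeProj, ne_eq, Subtype.ext_iff]

lemma projTree_le_induce {R : Finset (Fin n)} {T : SimpleGraph (Finset (Fin n))}
    (hT : T ≤ cube n) : projTree n R T ≤ (cube n).induce {W : Finset (Fin n) | W ⊆ R} := by
  rintro ⟨_, _⟩ ⟨_, _⟩ ⟨hne, U, V, hUV, rfl, rfl⟩
  exact cube_adj_inter (hT hUV) hne

lemma ncard_edgeSet_projTree_le {R : Finset (Fin n)} {T : SimpleGraph (Finset (Fin n))}
    (hT : T ≤ cube n) : (projTree n R T).edgeSet.ncard ≤ ∑ i ∈ R, dirCount T i := by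
  have hcollapse : {e | e ∈ T.edgeSet ∧ ¬ (e.map (cubeProj R)).IsDiag} ⊆
      {e | e ∈ T.edgeSet ∧ ∃ i ∈ R, edgeInDir i e} := by
    rintro e ⟨he, hdiag⟩
    induction e using Sym2.ind with
    | _ U V =>
      have hne : U ∩ R ≠ V ∩ R := fun h => hdiag (Sym2.mk_isDiag_iff.2 (Subtype.ext h))
      obtain ⟨i, hiR, hi⟩ := exists_mem_symmDiff_eq_singleton_of_inter_ne (hT he) hne
      exact ⟨he, i, hiR, edgeInDir_iff.2 hi⟩
  rw [projTree_eq_map, ← ncard_edgesInDirs_eq_sum_dirCount]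
  calc _ ≤ _ := Set.ncard_le_ncard (edgeSet_map_subset_image _ T) (Set.toFinite _)
    _ ≤ _ := Set.ncard_image_le (Set.toFinite _)
    _ ≤ _ := Set.ncard_le_ncard hcollapse (Set.toFinite _)

end Projection

theorem stmt10_general (n : ℕ) (R : Finset (Fin n))
    (T : SimpleGraph (Finset (Fin n))) (hT : IsSpanningTreeOf T (cube n))
    (hred : ReducesOver (fun i => dirCount T i) R) :
    IsSpanningTreeOf (projTree n R T)
      ((cube n).induce {W : Finset (Fin n) | W ⊆ R}) := by
  obtain ⟨hle, htree⟩ := hT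
  refine ⟨projTree_le_induce hle, ?_⟩
  have hconn : (projTree n R T).Connected := by
    rw [projTree_eq_map]
    exact htree.connected.map_of_surjective (cubeProj_surjective R)
  refine hconn.isTree_of_ncard_edgeSet_lt ?_
  calc (projTree n R T).edgeSet.ncard ≤ ∑ i ∈ R, dirCount T i := ncard_edgeSet_projTree_le hle
    _ = 2 ^ R.card - 1 := hred
    _ < Nat.card {W : Finset (Fin n) | W ⊆ R} := by
      rw [Finset.natCard_setOf_subset]
      exact Nat.sub_lt (Nat.two_pow_pos _) one_pos

/-- Corollary: the projection of a reducible tree is a tree.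
If the spanning tree `T` of `Q_n` reduces over the proper nonempty subset `R`, then
`π_R(T)` is a spanning tree of `Q_R`. -/
theorem stmt10 (n : ℕ) (R : Finset (Fin n)) (hR1 : R.Nonempty) (hR2 : R ≠ Finset.univ)
    (T : SimpleGraph (Finset (Fin n))) (hT : IsSpanningTreeOf T (cube n))
    (hred : ReducesOver (fun i => dirCount T i) R) :
    IsSpanningTreeOf (projTree n R T)
      ((cube n).induce {W : Finset (Fin n) | W ⊆ R}) :=
  stmt10_general n R T hT hred
end

section
/- Let R be a proper nonempty subset of [n], let T be a spanning tree of Q_n that reduces over R, and let e = {Y, Y ⊕ {j}} be an edge of T in a direction j ∉ R; set X = Y ∩ R, so that e is an edge of the spanning tree T(R,X) of Q_n(R,X). Then: (a) e is not i-slidable in T for any i ∈ R; and (b) for any i ∉ R with i ≠ j, e is i-slidable in T if and only if e is i-slidable as an edge of the spanning tree T(R,X) of the cube Q_n(R,X). -/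
open SimpleGraph

/-!
Deleting from a spanning tree `T` of `Q_n` its edges in directions of `R` leaves a forest on the
`2^|R|` subcubes `Q_n(R,X)`. If `T` reduces over `R`, this forest has `2^n - 2^|R|` edges, the
most it can have, so every `T(R,X)` is a spanning tree of `Q_n(R,X)`. Sliding an edge in a
direction `j ∉ R` does not change the signature on `R`, so the same holds for the slid tree `T'`.
For `i ∈ R` the slide moves `e` out of `Q_n(R,X)`, and `T'(R,X)` would be a tree strictly
contained in the tree `T(R,X)`. For `i ∉ R` both `e` and its slide lie in `Q_n(R,X)`, and
exchanging an edge inside a subtree of a tree gives a tree iff it gives a tree on the subtree: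
compare edge counts, and lift connectivity along the subtree.
-/

namespace SimpleGraph

variable {V : Type*} {G H : SimpleGraph V} {s : Set V} {e f : Sym2 V}

def replaceEdge (G : SimpleGraph V) (e f : Sym2 V) : SimpleGraph V :=
  fromEdgeSet ((G.edgeSet \ {e}) ∪ {f})

lemma edgeSet_replaceEdge (hf : ¬ f.IsDiag) :
    (G.replaceEdge e f).edgeSet = (G.edgeSet \ {e}) ∪ {f} := by
  rw [replaceEdge, edgeSet_fromEdgeSet, sdiff_eq_left, Set.disjoint_left]
  rintro g (hg | rfl) hd
  · exact G.not_isDiag_of_mem_edgeSet hg.1 hd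
  · exact hf hd

lemma IsTree.eq_of_le (hH : H.IsTree) (hG : G.IsAcyclic) (hle : H ≤ G) : H = G :=
  (isTree_iff_maximal_isAcyclic.mp hH).2.eq_of_le hG hle

lemma IsTree.notMem_edgeSet_of_isTree_replaceEdge (hG : G.IsTree) (he : e ∈ G.edgeSet)
    (hfe : f ≠ e) (h : (G.replaceEdge e f).IsTree) : f ∉ G.edgeSet := by
  intro hf
  have hle : G.replaceEdge e f ≤ G := by
    intro u v huv
    rw [replaceEdge, fromEdgeSet_adj] at huv
    obtain ⟨⟨hg, -⟩ | hg, -⟩ := huv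
    · exact hg
    · rw [← mem_edgeSet, Set.mem_singleton_iff.mp hg]
      exact hf
  have heq := h.eq_of_le hG.isAcyclic hle
  have : e ∈ (G.replaceEdge e f).edgeSet := by rwa [heq]
  rw [edgeSet_replaceEdge (G.not_isDiag_of_mem_edgeSet hf)] at this
  rcases this with ⟨-, hne⟩ | hef
  · exact hne rfl
  · exact hfe (Set.mem_singleton_iff.mp hef).symm

lemma Connected.of_forall_adj_reachable (hG : G.Connected)
    (h : ∀ u v, G.Adj u v → H.Reachable u v) : H.Connected := by
  have := hG.nonempty
  refine ⟨fun u v => (reachable_iff_reflTransGen u v).mpr ?_⟩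
  exact ((reachable_iff_reflTransGen u v).mp (hG.preconnected u v)).lift' id
    fun a b hab => (reachable_iff_reflTransGen a b).mp (h a b hab)

lemma ncard_edgeSet_induce (G : SimpleGraph V) (s : Set V) :
    (G.induce s).edgeSet.ncard = {e | e ∈ G.edgeSet ∧ ∀ v ∈ e, v ∈ s}.ncard := by
  rw [← Set.ncard_image_of_injective _ (Sym2.map.injective Subtype.val_injective)]
  congr 1
  ext e
  induction e using Sym2.ind with | _ u v =>
  constructor
  · rintro ⟨e', he', h⟩
    induction e' using Sym2.ind with | _ a b =>
    rw [Sym2.map_mk] at h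
    rw [← h]
    refine ⟨he', ?_⟩
    intro w hw
    rcases Sym2.mem_iff.mp hw with rfl | rfl
    exacts [a.2, b.2]
  · rintro ⟨he, hs⟩
    exact ⟨s(⟨u, hs u (Sym2.mem_mk_left u v)⟩, ⟨v, hs v (Sym2.mem_mk_right u v)⟩), he,
      rfl⟩

lemma induce_fromEdgeSet_congr {A B : Set (Sym2 V)}
    (h : ∀ a ∈ s, ∀ b ∈ s, s(a, b) ∈ A ↔ s(a, b) ∈ B) :
    (fromEdgeSet A).induce s = (fromEdgeSet B).induce s := by
  ext a b
  simp only [comap_adj, Function.Embedding.subtype_apply, fromEdgeSet_adj, h a a.2 b b.2]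

lemma not_isTree_induce_replaceEdge (hGs : (G.induce s).IsAcyclic) (he : e ∈ G.edgeSet)
    (hes : ∀ v ∈ e, v ∈ s) (hfs : ¬ ∀ v ∈ f, v ∈ s) :
    ¬ ((G.replaceEdge e f).induce s).IsTree := by
  intro h
  have hle : (G.replaceEdge e f).induce s ≤ G.induce s := by
    intro a b hab
    obtain ⟨⟨hg, -⟩ | hg, -⟩ := (fromEdgeSet_adj _).mp hab
    · exact hg
    · refine absurd (fun v hv => ?_) hfs
      rw [← Set.mem_singleton_iff.mp hg] at hv
      rcases Sym2.mem_iff.mp hv with rfl | rfl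
      exacts [a.2, b.2]
  induction e using Sym2.ind with | _ a b =>
  have hab : (G.induce s).Adj ⟨a, hes a (Sym2.mem_mk_left a b)⟩
      ⟨b, hes b (Sym2.mem_mk_right a b)⟩ := he
  rw [← h.eq_of_le hGs hle] at hab
  obtain ⟨⟨-, hne⟩ | hf, -⟩ := (fromEdgeSet_adj _).mp hab
  · exact hne rfl
  · exact hfs (Set.mem_singleton_iff.mp hf ▸ hes)

lemma IsAcyclic.exists_isTree_ge [Nonempty V] (hG : G.IsAcyclic) : ∃ F, G ≤ F ∧ F.IsTree := by
  obtain ⟨F, hGF, -, hF⟩ := connected_top.exists_isTree_le_of_le_of_isAcyclic le_top hG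
  exact ⟨F, hGF, hF⟩

section Finite

variable [Finite V]

lemma IsAcyclic.card_edgeSet_add_one_le [Nonempty V] (hG : G.IsAcyclic) :
    Nat.card G.edgeSet + 1 ≤ Nat.card V := by
  obtain ⟨F, hGF, hF⟩ := hG.exists_isTree_ge
  rw [← (isTree_iff_connected_and_card.mp hF).2]
  simp only [Nat.card_coe_set_eq]
  exact Nat.add_le_add_right (Set.ncard_le_ncard (edgeSet_mono hGF) (Set.toFinite _)) 1

lemma IsAcyclic.isTree_of_card_le [Nonempty V] (hG : G.IsAcyclic)
    (hcard : Nat.card V ≤ Nat.card G.edgeSet + 1) : G.IsTree := by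
  obtain ⟨F, hGF, hF⟩ := hG.exists_isTree_ge
  have hFcard := (isTree_iff_connected_and_card.mp hF).2
  simp only [Nat.card_coe_set_eq] at hcard hFcard
  have : G.edgeSet = F.edgeSet :=
    Set.eq_of_subset_of_ncard_le (edgeSet_mono hGF) (by omega) (Set.toFinite _)
  rwa [edgeSet_inj.mp this]

lemma IsTree.isTree_replaceEdge_iff_connected (hG : G.IsTree) (he : e ∈ G.edgeSet)
    (hf : ¬ f.IsDiag) : (G.replaceEdge e f).IsTree ↔ (G.replaceEdge e f).Connected := by
  refine ⟨fun h => h.connected, fun h => isTree_iff_connected_and_card.mpr ⟨h, ?_⟩⟩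
  have hGcard := (isTree_iff_connected_and_card.mp hG).2
  have hle : Nat.card (G.replaceEdge e f).edgeSet ≤ Nat.card G.edgeSet := by
    simp only [Nat.card_coe_set_eq, edgeSet_replaceEdge hf]
    calc ((G.edgeSet \ {e}) ∪ {f}).ncard ≤ (G.edgeSet \ {e}).ncard + ({f} : Set _).ncard :=
          Set.ncard_union_le _ _
      _ = G.edgeSet.ncard := by
          rw [Set.ncard_singleton, Set.ncard_sdiff_singleton_add_one he (Set.toFinite _)]
  have := h.card_vert_le_card_edgeSet_add_one
  omega

lemma IsTree.isTree_replaceEdge_iff_isTree_induce (hG : G.IsTree)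
    (hGs : (G.induce s).Connected) (he : e ∈ G.edgeSet) (hes : ∀ v ∈ e, v ∈ s)
    (hfs : ∀ v ∈ f, v ∈ s) (hf : ¬ f.IsDiag) (hfe : f ≠ e) :
    (G.replaceEdge e f).IsTree ↔ ((G.replaceEdge e f).induce s).IsTree := by
  constructor
  · intro h
    have hfG := hG.notMem_edgeSet_of_isTree_replaceEdge he hfe h
    have : Nonempty s := hGs.nonempty
    have hcard := (isTree_iff_connected_and_card.mp ⟨hGs, hG.isAcyclic.induce s⟩).2
    have hwithin : {g | g ∈ (G.replaceEdge e f).edgeSet ∧ ∀ v ∈ g, v ∈ s} =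
        insert f ({g | g ∈ G.edgeSet ∧ ∀ v ∈ g, v ∈ s} \ {e}) := by
      ext g
      simp only [edgeSet_replaceEdge hf, Set.mem_ofPred_eq, Set.mem_union, Set.mem_sdiff,
        Set.mem_singleton_iff, Set.mem_insert_iff]
      constructor
      · rintro ⟨⟨hg, hge⟩ | rfl, hgs⟩
        exacts [Or.inr ⟨⟨hg, hgs⟩, hge⟩, Or.inl rfl]
      · rintro (rfl | ⟨⟨hg, hgs⟩, hge⟩)
        exacts [⟨Or.inr rfl, hfs⟩, ⟨Or.inl ⟨hg, hge⟩, hgs⟩]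
    refine (h.isAcyclic.induce s).isTree_of_card_le ?_
    simp only [Nat.card_coe_set_eq, ncard_edgeSet_induce] at hcard ⊢
    have he' : e ∈ {g | g ∈ G.edgeSet ∧ ∀ v ∈ g, v ∈ s} := ⟨he, hes⟩
    rw [hwithin, Set.ncard_insert_of_notMem (fun h => hfG h.1.1),
      Set.ncard_sdiff_singleton_add_one he']
    omega
  · intro h
    rw [hG.isTree_replaceEdge_iff_connected he hf]
    refine hG.connected.of_forall_adj_reachable fun u v huv => ?_
    by_cases huve : s(u, v) = e
    · subst huve
      exact (h.connected.preconnected ⟨u, hes u (Sym2.mem_mk_left u v)⟩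
        ⟨v, hes v (Sym2.mem_mk_right u v)⟩).map (Embedding.induce s).toHom
    · exact Adj.reachable ((fromEdgeSet_adj _).mpr ⟨Or.inl ⟨huv, huve⟩, huv.ne⟩)

end Finite

end SimpleGraph

section Cube

variable {n : ℕ} {R Y U V : Finset (Fin n)} {T : SimpleGraph (Finset (Fin n))}
  {i j k : Fin n} {e f : Sym2 (Finset (Fin n))}

/-- The vertex set of the subcube `Q_n(R,X)`. -/
def subcube (R X : Finset (Fin n)) : Set (Finset (Fin n)) := {W | W ∩ R = X}

lemma symmDiff_singleton_ne (Y : Finset (Fin n)) (i : Fin n) : symmDiff Y {i} ≠ Y := by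
  rw [Ne, symmDiff_eq_left]
  exact Finset.singleton_ne_empty i

lemma symmDiff_singleton_inter_of_notMem (hi : i ∉ R) : symmDiff Y {i} ∩ R = Y ∩ R := by
  rw [← Finset.inf_eq_inter, inf_symmDiff_distrib_right, Finset.inf_eq_inter,
    Finset.inf_eq_inter, Finset.singleton_inter_of_notMem hi, ← Finset.bot_eq_empty, symmDiff_bot]

lemma symmDiff_singleton_inter_of_mem (hi : i ∈ R) :
    symmDiff Y {i} ∩ R = symmDiff (Y ∩ R) {i} := by
  rw [← Finset.inf_eq_inter, inf_symmDiff_distrib_right, Finset.inf_eq_inter,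
    Finset.inf_eq_inter, Finset.singleton_inter_of_mem hi]

lemma edgeInDir_mk_iff : edgeInDir i s(U, V) ↔ symmDiff U V = {i} := by
  constructor
  · rintro ⟨W, h⟩
    rcases Sym2.eq_iff.mp h with ⟨rfl, rfl⟩ | ⟨rfl, rfl⟩
    · exact symmDiff_symmDiff_cancel_left _ _
    · rw [symmDiff_comm]
      exact symmDiff_symmDiff_cancel_left _ _
  · intro h
    exact ⟨U, by rw [← h, symmDiff_symmDiff_cancel_left]⟩

lemma edgeInDir.eq (hi : edgeInDir i e) (hk : edgeInDir k e) : i = k := by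
  induction e using Sym2.ind with | _ U V =>
  rw [edgeInDir_mk_iff] at hi hk
  exact Finset.singleton_injective (hi.symm.trans hk)

lemma edgeInDir.not_isDiag (h : edgeInDir i e) : ¬ e.IsDiag := by
  obtain ⟨W, rfl⟩ := h
  rw [Sym2.mk_isDiag_iff]
  exact (symmDiff_singleton_ne W i).symm

lemma edgeInDir.mem_edgeSet_cube (h : edgeInDir i e) : e ∈ (cube n).edgeSet := by
  induction e using Sym2.ind with | _ U V =>
  show (symmDiff U V).card = 1
  rw [edgeInDir_mk_iff.mp h, Finset.card_singleton]

lemma exists_edgeInDir_of_mem_edgeSet_cube (he : e ∈ (cube n).edgeSet) :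
    ∃ i, edgeInDir i e := by
  induction e using Sym2.ind with | _ U V =>
  obtain ⟨i, hi⟩ := Finset.card_eq_one.mp he
  exact ⟨i, edgeInDir_mk_iff.mpr hi⟩

lemma edgeInDir_slideEdge (h : edgeInDir j e) (i : Fin n) : edgeInDir j (slideEdge i e) := by
  obtain ⟨W, rfl⟩ := h
  exact ⟨symmDiff W {i}, by rw [slideEdge, Sym2.map_mk, symmDiff_right_comm]⟩

lemma slideEdge_ne_self (h : edgeInDir j e) (hij : i ≠ j) : slideEdge i e ≠ e := by
  obtain ⟨W, rfl⟩ := h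
  rw [slideEdge, Sym2.map_mk, Ne, Sym2.eq_iff, symmDiff_right_inj, Finset.singleton_inj]
  rintro (⟨hW, -⟩ | ⟨rfl, -⟩)
  exacts [symmDiff_singleton_ne W i hW, hij rfl]

lemma mem_subcube_of_mem_edge (hj : j ∉ R) {v : Finset (Fin n)}
    (hv : v ∈ s(Y, symmDiff Y {j})) : v ∈ subcube R (Y ∩ R) := by
  rcases Sym2.mem_iff.mp hv with rfl | rfl
  exacts [rfl, symmDiff_singleton_inter_of_notMem hj]

lemma dirCount_replaceEdge (he : edgeInDir j e) (hf : edgeInDir j f) (hk : k ≠ j) :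
    dirCount (T.replaceEdge e f) k = dirCount T k := by
  unfold dirCount
  rw [edgeSet_replaceEdge hf.not_isDiag]
  congr 1
  ext g
  simp only [Set.mem_ofPred_eq, Set.mem_union, Set.mem_sdiff, Set.mem_singleton_iff]
  constructor
  · rintro ⟨⟨hg, -⟩ | rfl, hgk⟩
    exacts [⟨hg, hgk⟩, absurd (hgk.eq hf) hk]
  · rintro ⟨hg, hgk⟩
    exact ⟨Or.inl ⟨hg, by rintro rfl; exact hk (hgk.eq he)⟩, hgk⟩

lemma ReducesOver.replaceEdge (hred : ReducesOver (fun i => dirCount T i) R)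
    (he : edgeInDir j e) (hf : edgeInDir j f) (hj : j ∉ R) :
    ReducesOver (fun i => dirCount (T.replaceEdge e f) i) R := by
  unfold ReducesOver at hred ⊢
  rw [← hred]
  exact Finset.sum_congr rfl fun k hk => dirCount_replaceEdge he hf (ne_of_mem_of_not_mem hk hj)

end Cube

section Counting

variable {n : ℕ} {T : SimpleGraph (Finset (Fin n))}

lemma sum_dirCount_eq_ncard (T : SimpleGraph (Finset (Fin n))) (R : Finset (Fin n)) :
    ∑ i ∈ R, dirCount T i = {e | e ∈ T.edgeSet ∧ ∃ i ∈ R, edgeInDir i e}.ncard := by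
  have hunion : {e | e ∈ T.edgeSet ∧ ∃ i ∈ R, edgeInDir i e} =
      ⋃ i ∈ (R : Set (Fin n)), {e | e ∈ T.edgeSet ∧ edgeInDir i e} := by
    ext e
    simp only [Set.mem_ofPred_eq, Set.mem_iUnion, Finset.mem_coe, exists_prop]
    exact ⟨fun ⟨he, i, hi, hei⟩ => ⟨i, hi, he, hei⟩,
      fun ⟨i, hi, he, hei⟩ => ⟨he, i, hi, hei⟩⟩
  rw [hunion, Set.Finite.ncard_biUnion (Set.toFinite _) (fun _ _ => Set.toFinite _),
    finsum_mem_coe_finset]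
  · rfl
  · exact fun i _ k _ hik => Set.disjoint_left.mpr fun e hi hk => hik (hi.2.eq hk.2)

lemma ncard_edgeSet_eq_add_sum (hT : T ≤ cube n) (R : Finset (Fin n)) :
    T.edgeSet.ncard = {e | e ∈ T.edgeSet ∧ ∃ i ∈ R, edgeInDir i e}.ncard +
      ∑ X ∈ R.powerset, (edgesWithin (subcube R X) T).ncard := by
  have hunion : T.edgeSet = {e | e ∈ T.edgeSet ∧ ∃ i ∈ R, edgeInDir i e} ∪
      ⋃ X ∈ (R.powerset : Set (Finset (Fin n))), edgesWithin (subcube R X) T := by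
    ext e
    simp only [Set.mem_union, Set.mem_iUnion, Finset.coe_powerset, Set.mem_preimage,
      Set.mem_powerset_iff, Finset.coe_subset, exists_prop]
    refine ⟨fun he => ?_, ?_⟩
    · obtain ⟨d, hd⟩ := exists_edgeInDir_of_mem_edgeSet_cube (edgeSet_mono hT he)
      by_cases hdR : d ∈ R
      · exact Or.inl ⟨he, d, hdR, hd⟩
      · obtain ⟨W, rfl⟩ := hd
        exact Or.inr ⟨W ∩ R, Finset.inter_subset_right, he,
          fun v hv => mem_subcube_of_mem_edge hdR hv⟩
    · rintro (⟨he, -⟩ | ⟨X, -, he, -⟩) <;> exact he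
  have hdisj : Disjoint {e | e ∈ T.edgeSet ∧ ∃ i ∈ R, edgeInDir i e}
      (⋃ X ∈ (R.powerset : Set (Finset (Fin n))), edgesWithin (subcube R X) T) := by
    refine Set.disjoint_left.mpr ?_
    rintro e ⟨-, i, hi, W, rfl⟩ he
    obtain ⟨X, -, -, hX⟩ := Set.mem_iUnion₂.mp he
    have hW : W ∩ R = X := hX W (Sym2.mem_mk_left _ _)
    have hWi : symmDiff W {i} ∩ R = X := hX _ (Sym2.mem_mk_right _ _)
    rw [symmDiff_singleton_inter_of_mem hi, hW] at hWi
    exact symmDiff_singleton_ne X i hWi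
  conv_lhs => rw [hunion]
  rw [Set.ncard_union_eq hdisj, Set.Finite.ncard_biUnion (Set.toFinite _)
    (fun _ _ => Set.toFinite _), finsum_mem_coe_finset]
  intro X _ X' _ hXX'
  refine Set.disjoint_left.mpr fun e he he' => hXX' ?_
  induction e using Sym2.ind with | _ a b =>
  exact (he.2 a (Sym2.mem_mk_left a b)).symm.trans (he'.2 a (Sym2.mem_mk_left a b))

lemma sum_card_subcube (R : Finset (Fin n)) :
    ∑ X ∈ R.powerset, Nat.card (subcube R X) = 2 ^ n := by
  classical
  have hfib := Finset.card_eq_sum_card_fiberwise (f := (· ∩ R)) (s := Finset.univ)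
    (t := R.powerset) fun W _ => Finset.mem_powerset.mpr Finset.inter_subset_right
  rw [Finset.card_univ, Fintype.card_finset, Fintype.card_fin] at hfib
  rw [hfib]
  refine Finset.sum_congr rfl fun X _ => ?_
  rw [Nat.card_coe_set_eq, ← Set.ncard_coe_finset]
  congr
  ext W
  simp [subcube]

end Counting

section Slides

variable {n : ℕ} {R : Finset (Fin n)} {T : SimpleGraph (Finset (Fin n))}

theorem isTree_induce_subcube (hT : IsSpanningTreeOf T (cube n))
    (hred : ReducesOver (fun i => dirCount T i) R) {X : Finset (Fin n)} (hX : X ⊆ R) :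
    (T.induce (subcube R X)).IsTree := by
  have hacyclic : ∀ Z, (T.induce (subcube R Z)).IsAcyclic := fun Z => hT.2.isAcyclic.induce _
  have hbound : ∀ Z ∈ R.powerset,
      (edgesWithin (subcube R Z) T).ncard + 1 ≤ Nat.card (subcube R Z) := by
    intro Z hZ
    have : Nonempty (subcube R Z) :=
      ⟨⟨Z, Finset.inter_eq_left.mpr (Finset.mem_powerset.mp hZ)⟩⟩
    have := (hacyclic Z).card_edgeSet_add_one_le
    rwa [Nat.card_coe_set_eq, ncard_edgeSet_induce] at this
  have hsum : ∑ Z ∈ R.powerset, ((edgesWithin (subcube R Z) T).ncard + 1) =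
      ∑ Z ∈ R.powerset, Nat.card (subcube R Z) := by
    have htree := (isTree_iff_connected_and_card.mp hT.2).2
    rw [Nat.card_coe_set_eq, ncard_edgeSet_eq_add_sum hT.1 R, ← sum_dirCount_eq_ncard,
      Nat.card_eq_fintype_card, Fintype.card_finset, Fintype.card_fin] at htree
    rw [sum_card_subcube, Finset.sum_add_distrib, Finset.sum_const, Finset.card_powerset,
      smul_eq_mul, mul_one]
    have : 1 ≤ 2 ^ R.card := Nat.one_le_two_pow
    simp only [ReducesOver] at hred
    omega
  have hX' := (Finset.sum_eq_sum_iff_of_le hbound).mp hsum X (Finset.mem_powerset.mpr hX)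
  have : Nonempty (subcube R X) := ⟨⟨X, Finset.inter_eq_left.mpr hX⟩⟩
  refine (hacyclic X).isTree_of_card_le ?_
  simp only [Nat.card_coe_set_eq, ncard_edgeSet_induce] at hX' ⊢
  exact hX'.ge

variable {Y : Finset (Fin n)} {i j : Fin n} {e : Sym2 (Finset (Fin n))}

lemma slidable_iff :
    Slidable n T i e ↔
      e ∈ T.edgeSet ∧ IsSpanningTreeOf (T.replaceEdge e (slideEdge i e)) (cube n) :=
  Iff.rfl

theorem not_slidable_of_mem (hT : IsSpanningTreeOf T (cube n))
    (hred : ReducesOver (fun i => dirCount T i) R) (hj : j ∉ R) (hi : i ∈ R) :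
    ¬ Slidable n T i s(Y, symmDiff Y {j}) := by
  have hdir : edgeInDir j s(Y, symmDiff Y {j}) := ⟨Y, rfl⟩
  rintro ⟨he, hT'⟩
  refine not_isTree_induce_replaceEdge (hT.2.isAcyclic.induce (subcube R (Y ∩ R))) he
    (fun v hv => mem_subcube_of_mem_edge hj hv) (fun hf => ?_)
    (isTree_induce_subcube hT' (hred.replaceEdge hdir (edgeInDir_slideEdge hdir i) hj)
      Finset.inter_subset_right)
  have hYi : symmDiff Y {i} ∈ subcube R (Y ∩ R) := hf _ (by simp [slideEdge])
  rw [subcube, Set.mem_ofPred_eq, symmDiff_singleton_inter_of_mem hi] at hYi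
  exact symmDiff_singleton_ne _ i hYi

theorem slidable_iff_slidableOn (hT : IsSpanningTreeOf T (cube n))
    (hred : ReducesOver (fun i => dirCount T i) R) (hj : j ∉ R) (hi : i ∉ R) (hij : i ≠ j) :
    Slidable n T i s(Y, symmDiff Y {j}) ↔
      SlidableOn n (subcube R (Y ∩ R)) (edgesWithin (subcube R (Y ∩ R)) T) i
        s(Y, symmDiff Y {j}) := by
  have hf' : slideEdge i s(Y, symmDiff Y {j}) =
      s(symmDiff Y {i}, symmDiff (symmDiff Y {i}) {j}) := by
    rw [slideEdge, Sym2.map_mk, symmDiff_right_comm]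
  set s := subcube R (Y ∩ R)
  set e := s(Y, symmDiff Y {j})
  set f := slideEdge i e
  have hdir : edgeInDir j e := ⟨Y, rfl⟩
  have hf : edgeInDir j f := edgeInDir_slideEdge hdir i
  have hes : ∀ v ∈ e, v ∈ s := fun v hv => mem_subcube_of_mem_edge hj hv
  have hfs : ∀ v ∈ f, v ∈ s := by
    intro v hv
    rw [hf'] at hv
    have hv' : v ∩ R = symmDiff Y {i} ∩ R := mem_subcube_of_mem_edge hj hv
    rwa [symmDiff_singleton_inter_of_notMem hi] at hv'
  have hle : T.replaceEdge e f ≤ cube n := by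
    rw [← edgeSet_subset_edgeSet, edgeSet_replaceEdge hf.not_isDiag]
    rintro g (⟨hg, -⟩ | rfl)
    exacts [edgeSet_mono hT.1 hg, hf.mem_edgeSet_cube]
  have hinduce : (fromEdgeSet ((edgesWithin s T \ {e}) ∪ {f})).induce s =
      (T.replaceEdge e f).induce s := by
    refine induce_fromEdgeSet_congr fun a ha b hb => ?_
    have hab : ∀ v ∈ s(a, b), v ∈ s := fun v hv => by
      rcases Sym2.mem_iff.mp hv with rfl | rfl
      exacts [ha, hb]
    simp only [edgesWithin, Set.mem_union, Set.mem_sdiff, Set.mem_ofPred_eq]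
    tauto
  have hspanOn : IsSpanningTreeOn n s ((edgesWithin s T \ {e}) ∪ {f}) ↔
      ((T.replaceEdge e f).induce s).IsTree := by
    have hcube : (edgesWithin s T \ {e}) ∪ {f} ⊆ (cube n).edgeSet := by
      rintro g (⟨hg, -⟩ | rfl)
      exacts [edgeSet_mono hT.1 hg.1, hf.mem_edgeSet_cube]
    have hwithin : ∀ g ∈ (edgesWithin s T \ {e}) ∪ {f}, ∀ v ∈ g, v ∈ s := by
      rintro g (⟨hg, -⟩ | rfl)
      exacts [hg.2, hfs]
    rw [IsSpanningTreeOn, hinduce, and_iff_right hcube, and_iff_right hwithin]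
  have hiff (he : e ∈ T.edgeSet) :=
    hT.2.isTree_replaceEdge_iff_isTree_induce (isTree_induce_subcube hT hred
      Finset.inter_subset_right).connected he hes hfs hf.not_isDiag (slideEdge_ne_self hdir hij)
  rw [slidable_iff, SlidableOn, hspanOn, IsSpanningTreeOf, and_iff_right hle]
  exact ⟨fun ⟨he, h⟩ => ⟨⟨he, hes⟩, (hiff he).mp h⟩,
    fun ⟨he, h⟩ => ⟨he.1, (hiff he.1).mpr h⟩⟩

end Slides

theorem stmt12_general (n : ℕ) (R : Finset (Fin n))
    (T : SimpleGraph (Finset (Fin n))) (hT : IsSpanningTreeOf T (cube n))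
    (hred : ReducesOver (fun i => dirCount T i) R)
    (j : Fin n) (hj : j ∉ R) (Y : Finset (Fin n)) :
    (∀ i ∈ R, ¬ Slidable n T i s(Y, symmDiff Y {j})) ∧
    (∀ i, i ∉ R → i ≠ j →
      (Slidable n T i s(Y, symmDiff Y {j}) ↔
        SlidableOn n {W : Finset (Fin n) | W ∩ R = Y ∩ R}
          (edgesWithin {W : Finset (Fin n) | W ∩ R = Y ∩ R} T) i
          s(Y, symmDiff Y {j}))) :=
  ⟨fun _ hi => not_slidable_of_mem hT hred hj hi,
    fun _ hi hij => slidable_iff_slidableOn hT hred hj hi hij⟩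

/-- Theorem: slides of edges in directions outside `R`. Let `T` be a
spanning tree of `Q_n` reducing over the proper nonempty subset `R`, and let
`e = {Y, Y ⊕ {j}}` be an edge of `T` with `j ∉ R`; put `X = Y ∩ R`. Then (a) `e` is not
`i`-slidable for any `i ∈ R`, and (b) for `i ∉ R`, `i ≠ j`, `e` is `i`-slidable in `T`
iff it is `i`-slidable as an edge of the spanning tree `T(R,X)` of `Q_n(R,X)`. -/
theorem stmt12 (n : ℕ) (R : Finset (Fin n)) (hR1 : R.Nonempty) (hR2 : R ≠ Finset.univ)
    (T : SimpleGraph (Finset (Fin n))) (hT : IsSpanningTreeOf T (cube n))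
    (hred : ReducesOver (fun i => dirCount T i) R)
    (j : Fin n) (hj : j ∉ R) (Y : Finset (Fin n))
    (he : s(Y, symmDiff Y {j}) ∈ T.edgeSet) :
    (∀ i ∈ R, ¬ Slidable n T i s(Y, symmDiff Y {j})) ∧
    (∀ i, i ∉ R → i ≠ j →
      (Slidable n T i s(Y, symmDiff Y {j}) ↔
        SlidableOn n {W : Finset (Fin n) | W ∩ R = Y ∩ R}
          (edgesWithin {W : Finset (Fin n) | W ∩ R = Y ∩ R} T) i
          s(Y, symmDiff Y {j}))) :=
  stmt12_general n R T hT hred j hj Y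
end

section
/- Let R be a proper nonempty subset of [n], let T be a spanning tree of Q_n that reduces over R, and let e be an edge of T in a direction j ∈ R. Then: (a) for any i ∉ R, e is i-slidable in T; and (b) for any i ∈ R with i ≠ j, e is i-slidable in T if and only if π_R(e) is i-slidable as an edge of the spanning tree π_R(T) of Q_R. -/
/-!
If `T` reduces over `R`, it has only `2 ^ |R| - 1` edges in directions of `R`, so deleting them
leaves at most `2 ^ |R|` components. The remaining edges preserve `X ∩ R`, and there are `2 ^ |R|`
fibres of `X ↦ X ∩ R`, so the components are exactly these fibres. Hence `π_R(T)` is a tree,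
`π_R` is injective on the edges of `T` in directions of `R`, and for such an edge `e`,
reachability in `T - e` between `U` and `V` is reachability in `π_R(T) - π_R(e)` between
`U ∩ R` and `V ∩ R`. Finally, `T - e + f` is a tree iff the endpoints of `f` lie in different
components of `T - e`: for `i ∉ R` the slide of `e` has the same projected endpoints as `e`,
which `T - e` separates; for `i ∈ R` the condition is the same in `T` and in `π_R(T)`.
-/

open SimpleGraph

namespace SimpleGraph

variable {V : Type*} {G : SimpleGraph V}

lemma Reachable.map_of_forall_adj {W : Type*} {G' : SimpleGraph W} (f : V → W)
    (h : ∀ a b, G.Adj a b → G'.Reachable (f a) (f b)) {x y : V} (hxy : G.Reachable x y) :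
    G'.Reachable (f x) (f y) := by
  rw [reachable_iff_reflTransGen] at hxy ⊢
  exact Relation.ReflTransGen.lift' f
    (fun a b hab => (reachable_iff_reflTransGen _ _).mp (h a b hab)) _ _ hxy

lemma Reachable.deleteEdges_mk_or {x y a b : V} (h : G.Reachable x y) :
    (G.deleteEdges {s(a, b)}).Reachable x y ∨ (G.deleteEdges {s(a, b)}).Reachable x a ∨
      (G.deleteEdges {s(a, b)}).Reachable x b := by
  obtain ⟨p⟩ := h
  induction p with
  | nil => exact .inl .rfl
  | @cons x z y hxz _ ih =>
    by_cases he : s(x, z) = s(a, b)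
    · rcases Sym2.eq_iff.mp he with ⟨rfl, -⟩ | ⟨rfl, -⟩
      · exact .inr (.inl .rfl)
      · exact .inr (.inr .rfl)
    · have hxz' : (G.deleteEdges {s(a, b)}).Adj x z := by simp [hxz, he]
      rcases ih with h | h | h
      · exact .inl (hxz'.reachable.trans h)
      · exact .inr (.inl (hxz'.reachable.trans h))
      · exact .inr (.inr (hxz'.reachable.trans h))

/-- A component of `G - s(a, b)` other than that of `b` is determined by the component of `G`
containing it. -/
lemma card_connectedComponent_deleteEdges_singleton_le [Finite V] (e : Sym2 V) :
    Nat.card (G.deleteEdges {e}).ConnectedComponent ≤ Nat.card G.ConnectedComponent + 1 := by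
  classical
  induction e using Sym2.ind with | _ a b =>
  set G' := G.deleteEdges {s(a, b)}
  let f : G'.ConnectedComponent → Option G.ConnectedComponent := fun C =>
    if C = G'.connectedComponentMk b then none else some (C.map (Hom.ofLE (G.deleteEdges_le _)))
  have hf : Function.Injective f := by
    intro C D hCD
    induction C using ConnectedComponent.ind with | _ x =>
    induction D using ConnectedComponent.ind with | _ y =>
    simp only [f] at hCD
    rw [ConnectedComponent.eq]
    split_ifs at hCD with hx hy hy
    · exact ConnectedComponent.eq.mp (hx.trans hy.symm)
    · rw [Option.some_inj, ConnectedComponent.map_mk, ConnectedComponent.map_mk,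
        ConnectedComponent.eq] at hCD
      rw [ConnectedComponent.eq] at hx hy
      rcases hCD.deleteEdges_mk_or (a := a) (b := b) with h | h | h
      · exact h
      · rcases hCD.symm.deleteEdges_mk_or (a := a) (b := b) with h' | h' | h'
        · exact h'.symm
        · exact h.trans h'.symm
        · exact absurd h' hy
      · exact absurd h hx
  simpa [Finite.card_option] using Nat.card_le_card_of_injective f hf

lemma card_connectedComponent_deleteEdges_le [Finite V] (s : Set (Sym2 V)) :
    Nat.card (G.deleteEdges s).ConnectedComponent ≤ Nat.card G.ConnectedComponent + s.ncard := by
  classical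
  obtain ⟨t, rfl⟩ := (Set.toFinite s).exists_finset_coe
  induction t using Finset.induction with
  | empty => simp
  | @insert e t he ih =>
    rw [Set.ncard_coe_finset, Finset.card_insert_of_notMem he, Finset.coe_insert, Set.insert_eq,
      Set.union_comm, ← deleteEdges_deleteEdges]
    rw [Set.ncard_coe_finset] at ih
    have := card_connectedComponent_deleteEdges_singleton_le (G := G.deleteEdges t) e
    omega

/-- `f` induces a surjection from the at most `|s| + 1` components of `G - s` onto `range f`,
which is therefore a bijection. -/
lemma Connected.reachable_deleteEdges_of_ncard_lt [Finite V] (hG : G.Connected)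
    {s : Set (Sym2 V)} {α : Type*} (f : V → α)
    (hf : ∀ x y, (G.deleteEdges s).Adj x y → f x = f y)
    (hcard : s.ncard < (Set.range f).ncard) {x y : V} (hxy : f x = f y) :
    (G.deleteEdges s).Reachable x y := by
  have hwalk : ∀ v w (p : (G.deleteEdges s).Walk v w), p.IsPath →
      Set.rangeFactorization f v = Set.rangeFactorization f w := by
    intro v w p hp
    clear hp
    induction p with
    | nil => rfl
    | cons h _ ih => exact ih ▸ Subtype.ext (hf _ _ h)
  let φ := ConnectedComponent.lift _ hwalk
  have hφ : Function.Surjective φ := by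
    rintro ⟨_, v, rfl⟩
    exact ⟨(G.deleteEdges s).connectedComponentMk v, rfl⟩
  have hG1 : Nat.card G.ConnectedComponent ≤ 1 :=
    Finite.card_le_one_iff_subsingleton.mpr hG.preconnected.subsingleton_connectedComponent
  have hcc := card_connectedComponent_deleteEdges_le (G := G) s
  have hinj := (hφ.bijective_of_nat_card_le (by rw [Nat.card_coe_set_eq]; omega)).injective
  exact ConnectedComponent.exact (@hinj (.mk _ x) (.mk _ y) (Subtype.ext hxy))

lemma IsTree.isTree_deleteEdges_sup_edge_iff {T : SimpleGraph V} (hT : T.IsTree) {e : Sym2 V}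
    (he : e ∈ T.edgeSet) {u v : V} (huv : u ≠ v) :
    (T.deleteEdges {e} ⊔ edge u v).IsTree ↔ ¬ (T.deleteEdges {e}).Reachable u v := by
  induction e using Sym2.ind with | _ a b =>
  set T₀ := T.deleteEdges {s(a, b)}
  have hbridge : ¬ T₀.Reachable a b := isAcyclic_iff_forall_isBridge.mp hT.isAcyclic he
  constructor
  · intro hT' hreach
    have hadj : T₀.Adj u v :=
      ((isAcyclic_sup_fromEdgeSet_iff.mp hT'.isAcyclic).2 hreach).resolve_left huv
    rw [sup_eq_left.mpr ((edge_le_iff T₀).mpr (.inr hadj))] at hT'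
    exact hbridge (hT'.connected.preconnected a b)
  · intro hsep
    refine ⟨?_, (hT.isAcyclic.anti (deleteEdges_le _)).sup_edge_of_not_reachable hsep⟩
    have hside : ∀ x, T₀.Reachable x a ∨ T₀.Reachable x b := fun x => by
      rcases (hT.connected.preconnected x a).deleteEdges_mk_or (a := a) (b := b) with
        h | h | h <;> tauto
    have hle : T₀ ≤ T₀ ⊔ edge u v := le_sup_left
    have huv' : (T₀ ⊔ edge u v).Reachable u v := Adj.reachable (by simp [edge_adj, huv])
    have hab : (T₀ ⊔ edge u v).Reachable a b := by
      rcases hside u with hu | hu <;> rcases hside v with hv | hv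
      · exact absurd (hu.trans hv.symm) hsep
      · exact ((hu.mono hle).symm.trans huv').trans (hv.mono hle)
      · exact ((hv.mono hle).symm.trans huv'.symm).trans (hu.mono hle)
      · exact absurd (hu.trans hv.symm) hsep
    have hxa : ∀ x, (T₀ ⊔ edge u v).Reachable x a := fun x =>
      (hside x).elim (·.mono hle) (fun h => (h.mono hle).trans hab.symm)
    have := hT.connected.nonempty
    exact Connected.mk fun x y => (hxa x).trans (hxa y).symm

lemma reachable_induce_iff {s : Set V} (hs : ∀ u v, G.Adj u v → u ∈ s) {u v : s} :
    (G.induce s).Reachable u v ↔ G.Reachable u v := by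
  refine ⟨fun h => h.map (Embedding.induce s).toHom, fun ⟨p⟩ => ?_⟩
  suffices ∀ {x y : V} (p : G.Walk x y) (hx : x ∈ s) (hy : y ∈ s),
      (G.induce s).Reachable ⟨x, hx⟩ ⟨y, hy⟩ from this p u.2 v.2
  intro x y p
  induction p with
  | nil => exact fun _ _ => .rfl
  | cons h _ ih =>
    exact fun hx hy =>
      (show (G.induce s).Adj ⟨_, hx⟩ ⟨_, hs _ _ h.symm⟩ from h).reachable.trans (ih _ hy)

lemma fromEdgeSet_sdiff_union (E : Set (Sym2 V)) (e : Sym2 V) (u v : V) :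
    fromEdgeSet ((E \ {e}) ∪ {s(u, v)}) = (fromEdgeSet E).deleteEdges {e} ⊔ edge u v := by
  ext x y
  simp [edge_adj]
  tauto

lemma induce_fromEdgeSet_sdiff_union {s : Set V} (E : Set (Sym2 V)) (a b u v : s) :
    (fromEdgeSet ((E \ {s(↑a, ↑b)}) ∪ {s(↑u, ↑v)})).induce s =
      ((fromEdgeSet E).induce s).deleteEdges {s(a, b)} ⊔ edge u v := by
  ext x y
  simp [edge_adj, Subtype.ext_iff]
  tauto

lemma induce_deleteEdges_mk {s : Set V} (a b : s) :
    (G.induce s).deleteEdges {s(a, b)} = (G.deleteEdges {s(↑a, ↑b)}).induce s := by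
  ext x y
  simp [Subtype.ext_iff]

end SimpleGraph

open scoped symmDiff

section Cube

variable {n : ℕ} {R : Finset (Fin n)} {T : SimpleGraph (Finset (Fin n))}

lemma symmDiff_singleton_inter_of_mem_s13 {i : Fin n} (hi : i ∈ R) (X : Finset (Fin n)) :
    (X ∆ {i}) ∩ R = (X ∩ R) ∆ {i} := by
  rw [← Finset.inf_eq_inter, inf_symmDiff_distrib_right, Finset.inf_eq_inter, Finset.inf_eq_inter,
    Finset.singleton_inter_of_mem hi]

lemma symmDiff_singleton_inter_of_notMem_s13 {i : Fin n} (hi : i ∉ R) (X : Finset (Fin n)) :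
    (X ∆ {i}) ∩ R = X ∩ R := by
  rw [← Finset.inf_eq_inter, inf_symmDiff_distrib_right, Finset.inf_eq_inter, Finset.inf_eq_inter,
    Finset.singleton_inter_of_notMem hi, ← Finset.bot_eq_empty, symmDiff_bot]

lemma symmDiff_singleton_subset {X : Finset (Fin n)} {i : Fin n} (hX : X ⊆ R) (hi : i ∈ R) :
    X ∆ {i} ⊆ R :=
  symmDiff_le_sup.trans (Finset.union_subset hX (Finset.singleton_subset_iff.mpr hi))

lemma cube_adj_symmDiff_singleton (X : Finset (Fin n)) (i : Fin n) :
    (cube n).Adj X (X ∆ {i}) := by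
  change (X ∆ (X ∆ {i})).card = 1
  rw [symmDiff_symmDiff_cancel_left, Finset.card_singleton]

lemma exists_eq_symmDiff_singleton_of_cube_adj {X Y : Finset (Fin n)} (h : (cube n).Adj X Y) :
    ∃ d, Y = X ∆ {d} := by
  obtain ⟨d, hd⟩ := Finset.card_eq_one.mp h
  exact ⟨d, by rw [← hd, symmDiff_symmDiff_cancel_left]⟩

variable (R T) in
def edgesInDirs : Set (Sym2 (Finset (Fin n))) :=
  {e | e ∈ T.edgeSet ∧ ∃ i ∈ R, edgeInDir i e}

lemma projEdges_eq_image : projEdges R T = Sym2.map (· ∩ R) '' edgesInDirs R T := by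
  ext f
  simp only [projEdges, edgesInDirs, Set.mem_ofPred_eq, Set.mem_image]
  grind

lemma ncard_edgesInDirs_lt (hred : ReducesOver (fun i => dirCount T i) R) :
    (edgesInDirs R T).ncard < 2 ^ R.card := by
  have : edgesInDirs R T = ⋃ i ∈ R, {e | e ∈ T.edgeSet ∧ edgeInDir i e} := by
    ext e
    simp [edgesInDirs]
  have hle := R.set_ncard_biUnion_le fun i => {e | e ∈ T.edgeSet ∧ edgeInDir i e}
  rw [← this] at hle
  have := Nat.one_le_two_pow (n := R.card)
  rw [ReducesOver] at hred
  change _ ≤ ∑ i ∈ R, dirCount T i at hle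
  omega

lemma inter_eq_of_adj_deleteEdges_edgesInDirs (hT : T ≤ cube n) {X Y : Finset (Fin n)}
    (h : (T.deleteEdges (edgesInDirs R T)).Adj X Y) : X ∩ R = Y ∩ R := by
  rw [deleteEdges_adj] at h
  obtain ⟨d, rfl⟩ := exists_eq_symmDiff_singleton_of_cube_adj (hT h.1)
  have hd : d ∉ R := fun hd => h.2 ⟨h.1, d, hd, X, rfl⟩
  rw [symmDiff_singleton_inter_of_notMem_s13 hd]

lemma ncard_setOf_subset (R : Finset (Fin n)) :
    {A : Finset (Fin n) | A ⊆ R}.ncard = 2 ^ R.card := by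
  rw [show {A : Finset (Fin n) | A ⊆ R} = ↑R.powerset by ext; simp, Set.ncard_coe_finset,
    Finset.card_powerset]

lemma reachable_deleteEdges_edgesInDirs_of_inter_eq (hT : IsSpanningTreeOf T (cube n))
    (hcard : (edgesInDirs R T).ncard < 2 ^ R.card) {X Y : Finset (Fin n)} (h : X ∩ R = Y ∩ R) :
    (T.deleteEdges (edgesInDirs R T)).Reachable X Y := by
  refine hT.2.connected.reachable_deleteEdges_of_ncard_lt (· ∩ R)
    (fun _ _ => inter_eq_of_adj_deleteEdges_edgesInDirs hT.1) ?_ h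
  have : Set.range (· ∩ R) = {A : Finset (Fin n) | A ⊆ R} :=
    Set.ext fun A => ⟨by rintro ⟨X, rfl⟩; exact Finset.inter_subset_right,
      fun hA => ⟨A, Finset.inter_eq_left.mpr hA⟩⟩
  rwa [this, ncard_setOf_subset]

lemma reachable_proj_of_reachable_deleteEdges (hT : T ≤ cube n)
    (D : Set (Sym2 (Finset (Fin n)))) {X Y : Finset (Fin n)} (h : (T.deleteEdges D).Reachable X Y) :
    (fromEdgeSet (Sym2.map (· ∩ R) '' (edgesInDirs R T \ D))).Reachable (X ∩ R) (Y ∩ R) := by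
  refine h.map_of_forall_adj (· ∩ R) fun a b hab => ?_
  rw [deleteEdges_adj] at hab
  obtain ⟨d, rfl⟩ := exists_eq_symmDiff_singleton_of_cube_adj (hT hab.1)
  by_cases hd : d ∈ R
  · refine Adj.reachable ((fromEdgeSet_adj _).mpr
      ⟨⟨s(a, a ∆ {d}), ⟨⟨hab.1, d, hd, a, rfl⟩, hab.2⟩, rfl⟩, ?_⟩)
    rw [symmDiff_singleton_inter_of_mem_s13 hd]
    exact (cube_adj_symmDiff_singleton _ d).ne
  · simp only [symmDiff_singleton_inter_of_notMem_s13 hd, Reachable.rfl]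

lemma reachable_deleteEdges_of_reachable_proj (hT : IsSpanningTreeOf T (cube n))
    (hcard : (edgesInDirs R T).ncard < 2 ^ R.card) {D : Set (Sym2 (Finset (Fin n)))}
    (hD : D ⊆ edgesInDirs R T) {X Y : Finset (Fin n)}
    (h : (fromEdgeSet (Sym2.map (· ∩ R) '' (edgesInDirs R T \ D))).Reachable
      (X ∩ R) (Y ∩ R)) :
    (T.deleteEdges D).Reachable X Y := by
  have hfib {W W' : Finset (Fin n)} (h : W ∩ R = W' ∩ R) : (T.deleteEdges D).Reachable W W' :=
    (reachable_deleteEdges_edgesInDirs_of_inter_eq hT hcard h).mono (deleteEdges_anti hD)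
  have hstep {U U' W W' : Finset (Fin n)} (h : s(U, U') ∈ edgesInDirs R T \ D)
      (hW : W ∩ R = U ∩ R) (hW' : (T.deleteEdges D).Reachable U' W') :
      (T.deleteEdges D).Reachable W W' :=
    (hfib hW).trans
      ((deleteEdges_adj.mpr ⟨h.1.1, h.2⟩ : (T.deleteEdges D).Adj U U').reachable.trans hW')
  suffices ∀ {A B} (p : (fromEdgeSet (Sym2.map (· ∩ R) '' (edgesInDirs R T \ D))).Walk A B)
      {W W' : Finset (Fin n)}, W ∩ R = A → W' ∩ R = B →
        (T.deleteEdges D).Reachable W W' from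
    h.elim fun p => this p rfl rfl
  intro A B p
  induction p with
  | nil => exact fun hW hW' => hfib (hW.trans hW'.symm)
  | cons hadj _ ih =>
    intro W W' hW hW'
    obtain ⟨⟨g, hg, hgA⟩, -⟩ := (fromEdgeSet_adj _).mp hadj
    induction g using Sym2.ind with | _ U U' =>
    rcases Sym2.eq_iff.mp hgA with ⟨hU, hU'⟩ | ⟨hU, hU'⟩
    · exact hstep hg (hW.trans hU.symm) (ih hU' hW')
    · exact hstep (Sym2.eq_swap ▸ hg) (hW.trans hU'.symm) (ih hU hW')

lemma reachable_deleteEdges_iff_reachable_proj (hT : IsSpanningTreeOf T (cube n))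
    (hcard : (edgesInDirs R T).ncard < 2 ^ R.card) {D : Set (Sym2 (Finset (Fin n)))}
    (hD : D ⊆ edgesInDirs R T) (X Y : Finset (Fin n)) :
    (T.deleteEdges D).Reachable X Y ↔
      (fromEdgeSet (Sym2.map (· ∩ R) '' (edgesInDirs R T \ D))).Reachable (X ∩ R) (Y ∩ R) :=
  ⟨reachable_proj_of_reachable_deleteEdges hT.1 D,
    reachable_deleteEdges_of_reachable_proj hT hcard hD⟩

lemma subset_of_mem_projEdges {f : Sym2 (Finset (Fin n))} (hf : f ∈ projEdges R T)
    {W : Finset (Fin n)} (hW : W ∈ f) : W ⊆ R := by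
  rw [projEdges_eq_image] at hf
  obtain ⟨e, -, rfl⟩ := hf
  obtain ⟨X, -, rfl⟩ := Sym2.mem_map.mp hW
  exact Finset.inter_subset_right

lemma projEdges_subset_edgeSet_cube : projEdges R T ⊆ (cube n).edgeSet := by
  rw [projEdges_eq_image]
  rintro _ ⟨_, ⟨-, d, hd, X, rfl⟩, rfl⟩
  rw [Sym2.map_mk, mem_edgeSet, symmDiff_singleton_inter_of_mem_s13 hd]
  exact cube_adj_symmDiff_singleton _ d

/-- The projection is connected, with at most `2 ^ |R| - 1` edges on `2 ^ |R|` vertices. -/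
lemma isTree_induce_projEdges_and_injOn (hT : IsSpanningTreeOf T (cube n))
    (hcard : (edgesInDirs R T).ncard < 2 ^ R.card) :
    ((fromEdgeSet (projEdges R T)).induce {W | W ⊆ R}).IsTree ∧
      Set.InjOn (Sym2.map (· ∩ R)) (edgesInDirs R T) := by
  set G := fromEdgeSet (projEdges R T)
  have hG : ∀ u v, G.Adj u v → u ∈ {W : Finset (Fin n) | W ⊆ R} := fun u v h =>
    subset_of_mem_projEdges ((fromEdgeSet_adj _).mp h).1 (Sym2.mem_mk_left u v)
  have hconn : (G.induce {W | W ⊆ R}).Connected := by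
    have : Nonempty {W : Finset (Fin n) | W ⊆ R} := ⟨⟨∅, Finset.empty_subset R⟩⟩
    refine Connected.mk fun A B => (reachable_induce_iff hG).mpr ?_
    have h := reachable_proj_of_reachable_deleteEdges (R := R) hT.1 ∅
      ((deleteEdges_empty (G := T)).symm ▸ hT.2.connected.preconnected A.1 B.1)
    rwa [Set.sdiff_empty, ← projEdges_eq_image, Finset.inter_eq_left.mpr A.2,
      Finset.inter_eq_left.mpr B.2] at h
  have hedges : Nat.card (G.induce {W | W ⊆ R}).edgeSet ≤ (projEdges R T).ncard := by
    refine (Nat.card_le_card_of_injective _ (Embedding.induce _).mapEdgeSet.injective).trans ?_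
    rw [edgeSet_fromEdgeSet, Nat.card_coe_set_eq]
    exact Set.ncard_le_ncard Set.sdiff_subset
  have himage : (projEdges R T).ncard ≤ (edgesInDirs R T).ncard := by
    rw [projEdges_eq_image]
    exact Set.ncard_image_le
  have hV : Nat.card {W : Finset (Fin n) | W ⊆ R} = 2 ^ R.card := by
    rw [Nat.card_coe_set_eq, ncard_setOf_subset]
  have hverts := hconn.card_vert_le_card_edgeSet_add_one
  rw [hV] at hverts
  refine ⟨isTree_iff_connected_and_card.mpr ⟨hconn, ?_⟩, Set.injOn_of_ncard_image_eq ?_⟩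
  · rw [hV]
    omega
  · rw [← projEdges_eq_image]
    omega

lemma image_edgesInDirs_sdiff_singleton (hinj : Set.InjOn (Sym2.map (· ∩ R)) (edgesInDirs R T))
    {e : Sym2 (Finset (Fin n))} (he : e ∈ edgesInDirs R T) :
    Sym2.map (· ∩ R) '' (edgesInDirs R T \ {e}) = projEdges R T \ {Sym2.map (· ∩ R) e} := by
  rw [hinj.image_sdiff, Set.inter_eq_right.mpr (Set.singleton_subset_iff.mpr he),
    Set.image_singleton, projEdges_eq_image]

lemma slidable_iff_not_reachable (hT : IsSpanningTreeOf T (cube n)) {X : Finset (Fin n)}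
    {j : Fin n} (he : s(X, X ∆ {j}) ∈ T.edgeSet) (i : Fin n) :
    Slidable n T i s(X, X ∆ {j}) ↔
      ¬ (T.deleteEdges {s(X, X ∆ {j})}).Reachable (X ∆ {i}) (X ∆ {j} ∆ {i}) := by
  have hadj : (cube n).Adj (X ∆ {i}) (X ∆ {j} ∆ {i}) := by
    rw [symmDiff_right_comm]
    exact cube_adj_symmDiff_singleton _ j
  rw [Slidable, IsSpanningTreeOf, slideEdge, Sym2.map_mk, fromEdgeSet_sdiff_union,
    fromEdgeSet_edgeSet, hT.2.isTree_deleteEdges_sup_edge_iff he hadj.ne]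
  refine ⟨fun h => h.2.2, fun h => ⟨he, sup_le ((deleteEdges_le _).trans hT.1) ?_, h⟩⟩
  exact (edge_le_iff _).mpr (.inr hadj)

lemma slidableOn_iff_not_reachable
    (hP : ((fromEdgeSet (projEdges R T)).induce {W | W ⊆ R}).IsTree) {A : Finset (Fin n)}
    {i j : Fin n} (hA : A ⊆ R) (hi : i ∈ R) (hj : j ∈ R)
    (hf : s(A, A ∆ {j}) ∈ projEdges R T) :
    SlidableOn n {W | W ⊆ R} (projEdges R T) i s(A, A ∆ {j}) ↔
      ¬ ((fromEdgeSet (projEdges R T)).deleteEdges {s(A, A ∆ {j})}).Reachable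
        (A ∆ {i}) (A ∆ {j} ∆ {i}) := by
  have hadj : (cube n).Adj (A ∆ {i}) (A ∆ {j} ∆ {i}) := by
    rw [symmDiff_right_comm]
    exact cube_adj_symmDiff_singleton _ j
  have hAj := symmDiff_singleton_subset hA hj
  have hAi := symmDiff_singleton_subset hA hi
  have hAji := symmDiff_singleton_subset hAj hi
  have hmem : s((⟨A, hA⟩ : {W | W ⊆ R}), ⟨_, hAj⟩) ∈
      ((fromEdgeSet (projEdges R T)).induce {W | W ⊆ R}).edgeSet :=
    (fromEdgeSet_adj _).mpr ⟨hf, (cube_adj_symmDiff_singleton A j).ne⟩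
  have hinduce := induce_fromEdgeSet_sdiff_union (s := {W | W ⊆ R}) (projEdges R T) ⟨A, hA⟩
    ⟨_, hAj⟩ ⟨_, hAi⟩ ⟨_, hAji⟩
  dsimp only at hinduce
  have hG : ∀ u v, ((fromEdgeSet (projEdges R T)).deleteEdges {s(A, A ∆ {j})}).Adj u v →
      u ∈ {W : Finset (Fin n) | W ⊆ R} := fun u v h =>
    subset_of_mem_projEdges ((fromEdgeSet_adj _).mp h.1).1 (Sym2.mem_mk_left u v)
  rw [SlidableOn, IsSpanningTreeOn, slideEdge, Sym2.map_mk, hinduce,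
    hP.isTree_deleteEdges_sup_edge_iff hmem (fun h => hadj.ne (congrArg Subtype.val h)),
    induce_deleteEdges_mk, reachable_induce_iff hG]
  refine ⟨fun h => h.2.2.2, fun h => ⟨hf, ?_, ?_, h⟩⟩
  · rintro f (⟨hfP, -⟩ | rfl)
    · exact projEdges_subset_edgeSet_cube hfP
    · exact hadj
  · rintro f (⟨hfP, -⟩ | rfl) W hW
    · exact subset_of_mem_projEdges hfP hW
    · rcases Sym2.mem_iff.mp hW with rfl | rfl
      exacts [hAi, hAji]

end Cube

theorem stmt13_general (n : ℕ) (R : Finset (Fin n))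
    (T : SimpleGraph (Finset (Fin n))) (hT : IsSpanningTreeOf T (cube n))
    (hred : ReducesOver (fun i => dirCount T i) R)
    (j : Fin n) (hj : j ∈ R) (e : Sym2 (Finset (Fin n)))
    (he : e ∈ T.edgeSet) (hedir : edgeInDir j e) :
    (∀ i, i ∉ R → Slidable n T i e) ∧
    (∀ i ∈ R, i ≠ j →
      (Slidable n T i e ↔
        SlidableOn n {W : Finset (Fin n) | W ⊆ R} (projEdges R T) i
          (Sym2.map (· ∩ R) e))) := by
  obtain ⟨X, rfl⟩ := hedir
  have hcard := ncard_edgesInDirs_lt hred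
  have heR : s(X, X ∆ {j}) ∈ edgesInDirs R T := ⟨he, j, hj, X, rfl⟩
  have hreach := reachable_deleteEdges_iff_reachable_proj hT hcard
    (Set.singleton_subset_iff.mpr heR)
  refine ⟨fun i hi => ?_, fun i hi _ => ?_⟩
  · have hbridge : ¬ (T.deleteEdges {s(X, X ∆ {j})}).Reachable X (X ∆ {j}) :=
      isAcyclic_iff_forall_isBridge.mp hT.2.isAcyclic he
    rwa [slidable_iff_not_reachable hT he, hreach, symmDiff_singleton_inter_of_notMem_s13 hi,
      symmDiff_singleton_inter_of_notMem_s13 hi, ← hreach]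
  · obtain ⟨hP, hinj⟩ := isTree_induce_projEdges_and_injOn hT hcard
    have hpe : Sym2.map (· ∩ R) s(X, X ∆ {j}) = s(X ∩ R, (X ∩ R) ∆ {j}) := by
      rw [Sym2.map_mk, symmDiff_singleton_inter_of_mem_s13 hj]
    have hpeP : Sym2.map (· ∩ R) s(X, X ∆ {j}) ∈ projEdges R T :=
      projEdges_eq_image ▸ Set.mem_image_of_mem _ heR
    rw [hpe] at hpeP
    rw [slidable_iff_not_reachable hT he, hreach, image_edgesInDirs_sdiff_singleton hinj heR, hpe,
      slidableOn_iff_not_reachable hP Finset.inter_subset_right hi hj hpeP]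
    simp only [symmDiff_singleton_inter_of_mem_s13 hi, symmDiff_singleton_inter_of_mem_s13 hj,
      deleteEdges_fromEdgeSet]

/-- Theorem: slides of edges in directions in `R`. Let `T` be a
spanning tree of `Q_n` reducing over the proper nonempty subset `R`, and let `e` be an
edge of `T` in a direction `j ∈ R`. Then (a) `e` is `i`-slidable for every `i ∉ R`, and
(b) for `i ∈ R`, `i ≠ j`, `e` is `i`-slidable in `T` iff `π_R(e)` is `i`-slidable as an
edge of the spanning tree `π_R(T)` of `Q_R`. -/
theorem stmt13 (n : ℕ) (R : Finset (Fin n)) (hR1 : R.Nonempty) (hR2 : R ≠ Finset.univ)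
    (T : SimpleGraph (Finset (Fin n))) (hT : IsSpanningTreeOf T (cube n))
    (hred : ReducesOver (fun i => dirCount T i) R)
    (j : Fin n) (hj : j ∈ R) (e : Sym2 (Finset (Fin n)))
    (he : e ∈ T.edgeSet) (hedir : edgeInDir j e) :
    (∀ i, i ∉ R → Slidable n T i e) ∧
    (∀ i ∈ R, i ≠ j →
      (Slidable n T i e ↔
        SlidableOn n {W : Finset (Fin n) | W ⊆ R} (projEdges R T) i
          (Sym2.map (· ∩ R) e))) :=
  stmt13_general n R T hT hred j hj e he hedir
end
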